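/- Let ε, μ > 0, let ζ(t,X), V̄(t,X) ∈ ℝ² be smooth (X ∈ ℝ², flat bottom b = 0) with h := 1 + εζ > 0 satisfying ∂_t ζ + ∇·(h V̄) = 0, and let V*(t,X,z) ∈ ℝ² be smooth with zero vertical mean (∫_{−1}^{εζ} V* dz = 0) and satisfying, for all z in the water column, ∂_t V* + ε(V̄·∇)V* + ε(V*·∇)V̄ + ε√μ ( (V*·∇)V* − (1/h)∇·E ) = ε [ ∇·( ∫_{−1}^{z} (V̄ + √μ V*) dz' ) ] ∂_z V* − ε√μ (∇^⊥·V̄) (T*V̄)^⊥, where E(t,X) = ∫_{−1}^{εζ} V* ⊗ V* dz and T*V̄ = −(1/2)( (1+z)² − h²/3 ) ∇(∇·V̄). Then, with F_{ijk} = ∫_{−1}^{εζ} V*_i V*_j V*_k dz and V♯ = −(24/h³) ∫_{−1}^{εζ} ∫_z^{εζ} ∫_{−1}^{z'} V* dz'' dz' dz, the tensor E satisfies exactly, for i,j ∈ {1,2}: ∂_t E_{ij} + ε V̄·∇E_{ij} + ε (∇·V̄) E_{ij} + ε ( ∂_k V̄_i E_{kj} + E_{ik} ∂_k V̄_j ) +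 ε√μ ∂_k F_{ijk} = ε√μ 𝒟_{ij}, where 𝒟(V♯,V̄) = (h³/24) (∇^⊥·V̄) ( ∇^⊥(∇·V̄) ⊗ V♯ + V♯ ⊗ ∇^⊥(∇·V̄) ) (summation over repeated indices). -/

import Mathlib

noncomputable section

open intervalIntegral

def Smooth3 (f : ℝ → ℝ → ℝ → ℝ) : Prop :=
  ContDiff ℝ (⊤ : ℕ∞) fun p : ℝ × ℝ × ℝ => f p.1 p.2.1 p.2.2

def Smooth4 (f : ℝ → ℝ → ℝ → ℝ → ℝ) : Prop :=
  ContDiff ℝ (⊤ : ℕ∞) fun p : ℝ × ℝ × ℝ × ℝ => f p.1 p.2.1 p.2.2.1 p.2.2.2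

noncomputable def pt3 (f : ℝ → ℝ → ℝ → ℝ) (t x y : ℝ) : ℝ := deriv (fun s => f s x y) t
noncomputable def pd3 (i : Fin 2) (f : ℝ → ℝ → ℝ → ℝ) (t x y : ℝ) : ℝ :=
  if i = 0 then deriv (fun u => f t u y) x else deriv (fun u => f t x u) y
noncomputable def pt4 (f : ℝ → ℝ → ℝ → ℝ → ℝ) (t x y z : ℝ) : ℝ := deriv (fun s => f s x y z) t
noncomputable def pd4 (i : Fin 2) (f : ℝ → ℝ → ℝ → ℝ → ℝ) (t x y z : ℝ) : ℝ :=
  if i = 0 then deriv (fun u => f t u y z) x else deriv (fun u => f t x u z) y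
noncomputable def pz (f : ℝ → ℝ → ℝ → ℝ → ℝ) (t x y z : ℝ) : ℝ := deriv (fun u => f t x y u) z

/-- the Reynolds-like tensor E = ∫ V*⊗V* (flat bottom). -/
noncomputable def Etens (ε : ℝ) (ζ : ℝ → ℝ → ℝ → ℝ)
    (Vs : Fin 2 → ℝ → ℝ → ℝ → ℝ → ℝ) (i j : Fin 2) (t x y : ℝ) : ℝ :=
  ∫ z in (-1:ℝ)..(ε * ζ t x y), Vs i t x y z * Vs j t x y z

/-- the third-order tensor F = ∫ V*⊗V*⊗V* (flat bottom). -/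
noncomputable def Ftens (ε : ℝ) (ζ : ℝ → ℝ → ℝ → ℝ)
    (Vs : Fin 2 → ℝ → ℝ → ℝ → ℝ → ℝ) (i j k : Fin 2) (t x y : ℝ) : ℝ :=
  ∫ z in (-1:ℝ)..(ε * ζ t x y), Vs i t x y z * Vs j t x y z * Vs k t x y z

/-- V♯ = −(24/h³)∫∫∫ V* (flat bottom). -/
noncomputable def Vsharp (ε : ℝ) (ζ : ℝ → ℝ → ℝ → ℝ)
    (Vs : Fin 2 → ℝ → ℝ → ℝ → ℝ → ℝ) (i : Fin 2) (t x y : ℝ) : ℝ :=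
  -(24 / (1 + ε * ζ t x y)^3) *
    ∫ z in (-1:ℝ)..(ε * ζ t x y),
      ∫ zp in z..(ε * ζ t x y), ∫ zq in (-1:ℝ)..zp, Vs i t x y zq

/-- ∇·V̄ as a function of (t,x,y). -/
noncomputable def divVb (Vb : Fin 2 → ℝ → ℝ → ℝ → ℝ) (t x y : ℝ) : ℝ :=
  pd3 0 (Vb 0) t x y + pd3 1 (Vb 1) t x y

/-- the source tensor 𝒟(V♯,V̄) (flat bottom). -/
noncomputable def Dtens (ε : ℝ) (ζ : ℝ → ℝ → ℝ → ℝ)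
    (Vs : Fin 2 → ℝ → ℝ → ℝ → ℝ → ℝ) (Vb : Fin 2 → ℝ → ℝ → ℝ → ℝ)
    (i j : Fin 2) (t x y : ℝ) : ℝ :=
  (1 + ε * ζ t x y)^3 / 24 * (pd3 0 (Vb 1) t x y - pd3 1 (Vb 0) t x y) *
    ((if i = 0 then -(pd3 1 (fun t' x' y' => divVb Vb t' x' y') t x y)
        else pd3 0 (fun t' x' y' => divVb Vb t' x' y') t x y) * Vsharp ε ζ Vs j t x y
      + Vsharp ε ζ Vs i t x y *
        (if j = 0 then -(pd3 1 (fun t' x' y' => divVb Vb t' x' y') t x y)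
          else pd3 0 (fun t' x' y' => divVb Vb t' x' y') t x y))

open MeasureTheory Set Filter Topology Asymptotics


lemma contPartial1 (F : ℝ × ℝ → ℝ) (hF : ContDiff ℝ (⊤ : ℕ∞) F) :
    Continuous fun p : ℝ × ℝ => deriv (fun u => F (u, p.2)) p.1 := by
  have key : ∀ p : ℝ × ℝ, deriv (fun u => F (u, p.2)) p.1 = fderiv ℝ F p (1, 0) := by
    intro p
    have h1 : HasDerivAt (fun u => (u, p.2) : ℝ → ℝ × ℝ) (1, 0) p.1 :=
      (hasDerivAt_id p.1).prodMk (hasDerivAt_const _ _)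
    exact ((hF.differentiable (by simp) p).hasFDerivAt.comp_hasDerivAt p.1 h1).deriv
  simp only [key]
  exact (hF.continuous_fderiv (by simp)).clm_apply continuous_const

/-- Leibniz rule: derivative of a parametric interval integral with moving upper endpoint. -/
lemma hasDerivAt_leibniz (f : ℝ → ℝ → ℝ)
    (hf : ContDiff ℝ (⊤ : ℕ∞) fun p : ℝ × ℝ => f p.1 p.2)
    {g : ℝ → ℝ} {g' : ℝ} (a s₀ : ℝ) (hg : HasDerivAt g g' s₀) :
    HasDerivAt (fun s => ∫ z in a..(g s), f s z)
      ((∫ z in a..(g s₀), deriv (fun u => f u z) s₀) + g' * f s₀ (g s₀)) s₀ := by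
  have hslice : ∀ z, ContDiff ℝ (⊤ : ℕ∞) (fun s => f s z) := by
    intro z; exact hf.comp (contDiff_id.prodMk contDiff_const)
  have hsliceZ : ∀ s, Continuous (fun z => f s z) := by
    intro s; exact (hf.comp (contDiff_const.prodMk contDiff_id)).continuous
  have hder : Continuous fun p : ℝ × ℝ => deriv (fun u => f u p.2) p.1 := contPartial1 _ hf
  have h1 : HasDerivAt (fun s => ∫ z in a..(g s₀), f s z)
      (∫ z in a..(g s₀), deriv (fun u => f u z) s₀) s₀ := by
    obtain ⟨C, hC⟩ := ((isCompact_Icc (a := s₀-1) (b := s₀+1)).prod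
      (isCompact_uIcc (a := a) (b := g s₀))).exists_bound_of_continuousOn hder.continuousOn
    have key := intervalIntegral.hasDerivAt_integral_of_dominated_loc_of_deriv_le
      (F := fun s z => f s z) (F' := fun s z => deriv (fun u => f u z) s) (x₀ := s₀)
      (a := a) (b := g s₀) (bound := fun _ => C) (μ := volume) (s := Metric.ball s₀ 1) (Metric.ball_mem_nhds s₀ one_pos)
      (Eventually.of_forall fun s => (hsliceZ s).aestronglyMeasurable)
      ((hsliceZ s₀).intervalIntegrable _ _)
      ((hder.comp (continuous_const.prodMk continuous_id)).aestronglyMeasurable)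
      ?_ (intervalIntegrable_const) ?_
    · exact key.2
    · refine ae_of_all _ fun z hz s hs => ?_
      have hs' : |s - s₀| < 1 := by simpa [Real.norm_eq_abs] using mem_ball_iff_norm.mp hs
      have h1 := abs_le.mp hs'.le
      exact hC (s, z) ⟨⟨by linarith [h1.1], by linarith [h1.2]⟩, Set.uIoc_subset_uIcc hz⟩
    · exact ae_of_all _ fun z _ s _ => ((hslice z).differentiable (by simp) s).hasDerivAt
  -- part 2 : s ↦ ∫ z in g s₀ .. g s, f s z has derivative g' * f s₀ (g s₀)
  set b₀ := g s₀ with hb₀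
  have h2 : HasDerivAt (fun s => ∫ z in b₀..(g s), f s z) (g' * f s₀ b₀) s₀ := by
    have hψ : HasDerivAt (fun s => ∫ z in b₀..(g s), (f s z - f s₀ b₀)) 0 s₀ := by
      rw [hasDerivAt_iff_isLittleO]
      simp only [← hb₀, integral_same, sub_zero, smul_zero, sub_zero]
      -- reduced
      -- g s - b₀ = O(s - s₀)
      obtain ⟨C, hCpos, hCbd⟩ := hg.isBigO_sub.exists_pos
      rw [isLittleO_iff]
      intro c hc
      -- continuity of f at (s₀, b₀)
      have hcont : ContinuousAt (fun p : ℝ × ℝ => f p.1 p.2) (s₀, b₀) := hf.continuous.continuousAt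
      rcases Metric.continuousAt_iff.mp hcont (c / (2 * C)) (by positivity) with ⟨δ, hδpos, hδ⟩
      have hev1 : ∀ᶠ s in 𝓝 s₀, |s - s₀| < δ / 2 := by
        have := Metric.ball_mem_nhds s₀ (half_pos hδpos)
        filter_upwards [this] with s hs
        simpa [Real.dist_eq] using hs
      have hev2 : ∀ᶠ s in 𝓝 s₀, |g s - b₀| < δ / 2 := by
        have hgc : ContinuousAt g s₀ := hg.continuousAt
        have := hgc (Metric.ball_mem_nhds b₀ (half_pos hδpos))
        filter_upwards [this] with s hs
        simpa [Real.dist_eq, hb₀] using hs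
      have hev3 := hCbd.bound
      filter_upwards [hev1, hev2, hev3] with s h1' h2' h3'
      have hbound : ∀ z ∈ Set.uIoc b₀ (g s), ‖f s z - f s₀ b₀‖ ≤ c / (2 * C) := by
        intro z hz
        have hz' : z ∈ uIcc b₀ (g s) := Set.uIoc_subset_uIcc hz
        have hz2 : |z - b₀| ≤ |g s - b₀| := by
          rcases Set.mem_uIcc.mp hz' with ⟨ha, hb⟩ | ⟨ha, hb⟩ <;> rw [abs_le] <;>
            constructor <;> linarith [le_abs_self (g s - b₀), neg_abs_le (g s - b₀)]
        have hdist : dist (s, z) (s₀, b₀) < δ := by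
          rw [Prod.dist_eq]
          have : |z - b₀| < δ / 2 := lt_of_le_of_lt hz2 h2'
          simp only [Real.dist_eq]
          exact max_lt (by linarith) (by linarith)
        exact le_of_lt (by simpa [Real.dist_eq] using hδ hdist)
      calc ‖∫ z in b₀..(g s), (f s z - f s₀ b₀)‖
          ≤ c / (2 * C) * |g s - b₀| := by
            simpa using intervalIntegral.norm_integral_le_of_norm_le_const hbound
        _ ≤ c / (2 * C) * (C * ‖s - s₀‖) := by
            apply mul_le_mul_of_nonneg_left _ (by positivity)
            simpa [Real.norm_eq_abs] using h3'
        _ ≤ c * ‖s - s₀‖ := by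
            rw [Real.norm_eq_abs]
            have : c / (2 * C) * (C * |s - s₀|) = (c / 2) * |s - s₀| := by
              field_simp
            rw [this]
            nlinarith [abs_nonneg (s - s₀)]
    have hφ : HasDerivAt (fun s => f s₀ b₀ * (g s - b₀)) (f s₀ b₀ * g') s₀ :=
      ((hg.sub_const b₀).const_mul (f s₀ b₀))
    have heq : ∀ s, (∫ z in b₀..(g s), f s z)
        = (∫ z in b₀..(g s), (f s z - f s₀ b₀)) + f s₀ b₀ * (g s - b₀) := by
      intro s
      rw [intervalIntegral.integral_sub ((hsliceZ s).intervalIntegrable _ _)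
        intervalIntegrable_const]
      simp [mul_comm]
    simpa [heq, mul_comm, Pi.add_def] using hψ.add hφ
  have hsum : ∀ s, (∫ z in a..(g s), f s z)
      = (∫ z in a..b₀, f s z) + ∫ z in b₀..(g s), f s z := by
    intro s
    rw [intervalIntegral.integral_add_adjacent_intervals ((hsliceZ s).intervalIntegrable _ _)
      ((hsliceZ s).intervalIntegrable _ _)]
  simpa [hsum, Pi.add_def] using h1.add h2

lemma triple_integral_eq (V : ℝ → ℝ) (hV : Continuous V) (H : ℝ)
    (hmean : (∫ z in (-1:ℝ)..H, V z) = 0) :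
    (∫ z in (-1:ℝ)..H, ∫ zp in z..H, ∫ zq in (-1:ℝ)..zp, V zq)
      = -(1/2) * ∫ z in (-1:ℝ)..H, (1+z)^2 * V z := by
  set W : ℝ → ℝ := fun z => ∫ zq in (-1:ℝ)..z, V zq with hW
  have hWd : ∀ z, HasDerivAt W (V z) z := fun z =>
    intervalIntegral.integral_hasDerivAt_right (hV.intervalIntegrable _ _)
      (hV.stronglyMeasurable.stronglyMeasurableAtFilter) hV.continuousAt
  have hWc : Continuous W := continuous_iff_continuousAt.mpr fun z => (hWd z).continuousAt
  set W2 : ℝ → ℝ := fun z => ∫ zq in (-1:ℝ)..z, W zq with hW2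
  have hW2d : ∀ z, HasDerivAt W2 (W z) z := fun z =>
    intervalIntegral.integral_hasDerivAt_right (hWc.intervalIntegrable _ _)
      (hWc.stronglyMeasurable.stronglyMeasurableAtFilter) hWc.continuousAt
  have hW2c : Continuous W2 := continuous_iff_continuousAt.mpr fun z => (hW2d z).continuousAt
  set C : ℝ := ∫ zq in (-1:ℝ)..H, W zq with hC
  have hinner : ∀ z : ℝ, (∫ zp in z..H, W zp) = C - W2 z := by
    intro z
    have := intervalIntegral.integral_add_adjacent_intervals (a := (-1:ℝ)) (b := z) (c := H) (μ := volume)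
      (hWc.intervalIntegrable _ _) (hWc.intervalIntegrable _ _)
    show (∫ zp in z..H, W zp) = (∫ zq in (-1:ℝ)..H, W zq) - ∫ zq in (-1:ℝ)..z, W zq
    linarith [this]
  have step0 : (∫ z in (-1:ℝ)..H, ∫ zp in z..H, ∫ zq in (-1:ℝ)..zp, V zq)
      = ∫ z in (-1:ℝ)..H, (C - W2 z) := by
    apply intervalIntegral.integral_congr
    intro z _
    exact hinner z
  have stepA : (∫ z in (-1:ℝ)..H, (C - W2 z)) = ∫ z in (-1:ℝ)..H, (1+z) * W z := by
    have h := intervalIntegral.integral_deriv_mul_eq_sub (a := (-1:ℝ)) (b := H)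
      (u := fun z => C - W2 z) (u' := fun z => -W z)
      (v := fun z => 1 + z) (v' := fun z => (1:ℝ))
      (fun z _ => ((hW2d z).const_sub C))
      (fun z _ => ((hasDerivAt_id z).const_add 1))
      ((hWc.neg).intervalIntegrable _ _) (intervalIntegrable_const)
    have hWH : W2 H = C := rfl
    have hsplit : (∫ z in (-1:ℝ)..H, (-W z * (1+z) + (C - W2 z) * 1))
        = (∫ z in (-1:ℝ)..H, -((1+z) * W z)) + ∫ z in (-1:ℝ)..H, (C - W2 z) := by
      rw [← intervalIntegral.integral_add]
      · apply intervalIntegral.integral_congr; intro z _; ring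
      · exact (((continuous_const.add continuous_id).mul hWc).neg).intervalIntegrable _ _
      · exact ((continuous_const.sub hW2c)).intervalIntegrable _ _
    rw [hsplit] at h
    rw [intervalIntegral.integral_neg] at h
    have h2 : W2 (-1) = 0 := by simp [hW2]
    rw [hWH, h2] at h
    linarith [h]
  have stepB : (∫ z in (-1:ℝ)..H, (1+z) * W z) = -(1/2) * ∫ z in (-1:ℝ)..H, (1+z)^2 * V z := by
    have h := intervalIntegral.integral_mul_deriv_eq_deriv_mul (a := (-1:ℝ)) (b := H)
      (u := W) (u' := V) (v := fun z => (1+z)^2 / 2) (v' := fun z => 1 + z)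
      (fun z _ => hWd z)
      (fun z _ => by
        have : HasDerivAt (fun z : ℝ => (1+z)^2) (2 * (1+z)^1 * 1) z :=
          (((hasDerivAt_id z).const_add 1).pow 2)
        simpa using this.div_const 2)
      (hV.intervalIntegrable _ _)
      ((continuous_const.add continuous_id).intervalIntegrable _ _)
    -- h : ∫ W z * (1+z) = W H * v H - W (-1) * v (-1) - ∫ V z * ((1+z)^2/2)
    have hWH0 : W H = 0 := hmean
    have hWm1 : W (-1) = 0 := by simp [hW]
    rw [hWH0, hWm1] at h
    have e1 : (∫ z in (-1:ℝ)..H, (1+z) * W z) = ∫ z in (-1:ℝ)..H, W z * (1+z) := by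
      apply intervalIntegral.integral_congr; intro z _; ring
    have e2 : (∫ z in (-1:ℝ)..H, V z * ((1+z)^2 / 2))
        = (1/2) * ∫ z in (-1:ℝ)..H, (1+z)^2 * V z := by
      rw [← intervalIntegral.integral_const_mul]
      apply intervalIntegral.integral_congr; intro z _; ring
    rw [e1, h, e2]; ring
  rw [step0, stepA, stepB]

lemma iadd {a b : ℝ} {f g : ℝ → ℝ} (hf : Continuous f) (hg : Continuous g) :
    (∫ z in a..b, (f z + g z)) = (∫ z in a..b, f z) + ∫ z in a..b, g z :=
  intervalIntegral.integral_add (hf.intervalIntegrable _ _) (hg.intervalIntegrable _ _)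


/-- exact evolution equation for the Reynolds-like tensor E in the
two-dimensional flat-bottom case, with source 𝒟 coupling horizontal and vertical
vorticity. -/
theorem E_tensor_evolution
    (ε μ : ℝ) (hε : 0 < ε) (hμ : 0 < μ)
    (ζ : ℝ → ℝ → ℝ → ℝ) (Vb : Fin 2 → ℝ → ℝ → ℝ → ℝ)
    (Vs : Fin 2 → ℝ → ℝ → ℝ → ℝ → ℝ)
    (hζ : Smooth3 ζ) (hVb : ∀ i, Smooth3 (Vb i)) (hVs : ∀ i, Smooth4 (Vs i))
    (hpos : ∀ t x y, 0 < 1 + ε * ζ t x y)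
    -- mass conservation
    (hmass : ∀ t x y,
      pt3 ζ t x y
        + (∑ j : Fin 2, pd3 j (fun t' x' y' =>
            (1 + ε * ζ t' x' y') * Vb j t' x' y') t x y) = 0)
    -- zero vertical mean of V*
    (hmean : ∀ i, ∀ t x y, (∫ z in (-1:ℝ)..(ε * ζ t x y), Vs i t x y z) = 0)
    -- evolution equation for V* in the water column
    (heq : ∀ (i : Fin 2) (t x y z : ℝ), -1 ≤ z → z ≤ ε * ζ t x y →
      pt4 (Vs i) t x y z
        + ε * (∑ k : Fin 2, Vb k t x y * pd4 k (Vs i) t x y z)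
        + ε * (∑ k : Fin 2, Vs k t x y z * pd3 k (Vb i) t x y)
        + ε * Real.sqrt μ *
            ((∑ k : Fin 2, Vs k t x y z * pd4 k (Vs i) t x y z)
              - (1 + ε * ζ t x y)⁻¹ *
                  ∑ k : Fin 2, pd3 k (fun t' x' y' => Etens ε ζ Vs i k t' x' y') t x y)
      = ε * (∑ k : Fin 2, pd3 k (fun t' x' y' =>
            ∫ zp in (-1:ℝ)..z,
              (Vb k t' x' y' + Real.sqrt μ * Vs k t' x' y' zp)) t x y)
          * pz (Vs i) t x y z
        - ε * Real.sqrt μ * (pd3 0 (Vb 1) t x y - pd3 1 (Vb 0) t x y) *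
            (if i = 0 then
              -(-(1/2) * ((1 + z)^2 - (1 + ε * ζ t x y)^2 / 3)
                  * pd3 1 (fun t' x' y' => divVb Vb t' x' y') t x y)
            else
              -(1/2) * ((1 + z)^2 - (1 + ε * ζ t x y)^2 / 3)
                  * pd3 0 (fun t' x' y' => divVb Vb t' x' y') t x y)) :
    ∀ (i j : Fin 2) (t x y : ℝ),
      pt3 (Etens ε ζ Vs i j) t x y
        + ε * (∑ k : Fin 2, Vb k t x y * pd3 k (Etens ε ζ Vs i j) t x y)
        + ε * divVb Vb t x y * Etens ε ζ Vs i j t x y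
        + ε * ((∑ k : Fin 2, pd3 k (Vb i) t x y * Etens ε ζ Vs k j t x y)
            + (∑ k : Fin 2, Etens ε ζ Vs i k t x y * pd3 k (Vb j) t x y))
        + ε * Real.sqrt μ * (∑ k : Fin 2, pd3 k (Ftens ε ζ Vs i j k) t x y)
      = ε * Real.sqrt μ * Dtens ε ζ Vs Vb i j t x y := by
  intro i j t x y
  have hVs' : ∀ m : Fin 2, ContDiff ℝ (⊤ : ℕ∞) fun p : ℝ × ℝ × ℝ × ℝ => Vs m p.1 p.2.1 p.2.2.1 p.2.2.2 := hVs
  have hζ' : ContDiff ℝ (⊤ : ℕ∞) fun p : ℝ × ℝ × ℝ => ζ p.1 p.2.1 p.2.2 := hζ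
  have hVb' : ∀ m : Fin 2, ContDiff ℝ (⊤ : ℕ∞) fun p : ℝ × ℝ × ℝ => Vb m p.1 p.2.1 p.2.2 := hVb
  have hle : (-1:ℝ) ≤ ε * ζ t x y := by have := hpos t x y; linarith
  have hne : (1 + ε * ζ t x y) ≠ 0 := ne_of_gt (hpos t x y)
  -- continuity of the various z-slices
  have hc : ∀ m : Fin 2, Continuous fun z => Vs m t x y z := fun m => by
    have hh := hVs' m
    exact (by fun_prop : ContDiff ℝ (⊤ : ℕ∞) fun z => Vs m t x y z).continuous
  have hct : ∀ m : Fin 2, Continuous fun z => pt4 (Vs m) t x y z := by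
    intro m
    have hh := hVs' m
    have h2 := (contPartial1 (fun p : ℝ × ℝ => Vs m p.1 x y p.2) (by fun_prop)).comp
      ((continuous_const.prodMk continuous_id) : Continuous fun z : ℝ => ((t, z) : ℝ × ℝ))
    simpa [pt4, Function.comp_def] using h2
  have hc0 : ∀ m : Fin 2, Continuous fun z => pd4 0 (Vs m) t x y z := by
    intro m
    have hh := hVs' m
    have h2 := (contPartial1 (fun p : ℝ × ℝ => Vs m t p.1 y p.2) (by fun_prop)).comp
      ((continuous_const.prodMk continuous_id) : Continuous fun z : ℝ => ((x, z) : ℝ × ℝ))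
    simpa [pd4, Function.comp_def] using h2
  have hc1 : ∀ m : Fin 2, Continuous fun z => pd4 1 (Vs m) t x y z := by
    intro m
    have hh := hVs' m
    have h2 := (contPartial1 (fun p : ℝ × ℝ => Vs m t x p.1 p.2) (by fun_prop)).comp
      ((continuous_const.prodMk continuous_id) : Continuous fun z : ℝ => ((y, z) : ℝ × ℝ))
    simpa [pd4, Function.comp_def] using h2
  have hcz : ∀ m : Fin 2, Continuous fun z => pz (Vs m) t x y z := by
    intro m
    have hh := hVs' m
    have h2 : ContDiff ℝ (⊤ : ℕ∞) fun u => Vs m t x y u := by fun_prop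
    have h3 := h2.continuous_deriv (by simp)
    simpa [pz] using h3
  have hcT : Continuous fun z : ℝ => (-(1/2) * ((1 + z)^2 - (1 + ε * ζ t x y)^2 / 3)) := by fun_prop
  have hVsi := hVs' i
  have hVsj := hVs' j
  have hVs0 := hVs' (0 : Fin 2)
  have hVs1 := hVs' (1 : Fin 2)
  have hVb0 := hVb' (0 : Fin 2)
  have hVb1 := hVb' (1 : Fin 2)
  have hVbi := hVb' i
  have hVbj := hVb' j
  -- pointwise differentiability of slices
  have hdT : ∀ (m : Fin 2) (z : ℝ), DifferentiableAt ℝ (fun u => Vs m u x y z) t := fun m z => by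
    have hh := hVs' m
    exact ((by fun_prop : ContDiff ℝ (⊤ : ℕ∞) (fun u => Vs m u x y z)).differentiable (by simp)).differentiableAt
  have hdX : ∀ (m : Fin 2) (z : ℝ), DifferentiableAt ℝ (fun u => Vs m t u y z) x := fun m z => by
    have hh := hVs' m
    exact ((by fun_prop : ContDiff ℝ (⊤ : ℕ∞) (fun u => Vs m t u y z)).differentiable (by simp)).differentiableAt
  have hdY : ∀ (m : Fin 2) (z : ℝ), DifferentiableAt ℝ (fun u => Vs m t x u z) y := fun m z => by
    have hh := hVs' m
    exact ((by fun_prop : ContDiff ℝ (⊤ : ℕ∞) (fun u => Vs m t x u z)).differentiable (by simp)).differentiableAt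
  have hdZ : ∀ (m : Fin 2) (z : ℝ), HasDerivAt (fun u => Vs m t x y u) (pz (Vs m) t x y z) z := fun m z => by
    have hh := hVs' m
    exact DifferentiableAt.hasDerivAt
      (((by fun_prop : ContDiff ℝ (⊤ : ℕ∞) (fun u => Vs m t x y u)).differentiable (by simp)).differentiableAt)
  have hbX : ∀ m : Fin 2, DifferentiableAt ℝ (fun u => Vb m t u y) x := fun m => by
    have hh := hVb' m
    exact ((by fun_prop : ContDiff ℝ (⊤ : ℕ∞) (fun u => Vb m t u y)).differentiable (by simp)).differentiableAt
  have hbY : ∀ m : Fin 2, DifferentiableAt ℝ (fun u => Vb m t x u) y := fun m => by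
    have hh := hVb' m
    exact ((by fun_prop : ContDiff ℝ (⊤ : ℕ∞) (fun u => Vb m t x u)).differentiable (by simp)).differentiableAt
  -- derivatives of the moving boundary
  have hgT : HasDerivAt (fun s => ε * ζ s x y) (ε * pt3 ζ t x y) t := by
    have hd : DifferentiableAt ℝ (fun s => ζ s x y) t :=
      ((by fun_prop : ContDiff ℝ (⊤ : ℕ∞) (fun s => ζ s x y)).differentiable (by simp)).differentiableAt
    simpa [pt3] using hd.hasDerivAt.const_mul ε
  have hgX : HasDerivAt (fun s => ε * ζ t s y) (ε * pd3 0 ζ t x y) x := by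
    have hd : DifferentiableAt ℝ (fun s => ζ t s y) x :=
      ((by fun_prop : ContDiff ℝ (⊤ : ℕ∞) (fun s => ζ t s y)).differentiable (by simp)).differentiableAt
    simpa [pd3] using hd.hasDerivAt.const_mul ε
  have hgY : HasDerivAt (fun s => ε * ζ t x s) (ε * pd3 1 ζ t x y) y := by
    have hd : DifferentiableAt ℝ (fun s => ζ t x s) y :=
      ((by fun_prop : ContDiff ℝ (⊤ : ℕ∞) (fun s => ζ t x s)).differentiable (by simp)).differentiableAt
    simpa [pd3] using hd.hasDerivAt.const_mul ε
  -- Leibniz in t for E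
  have h1 : pt3 (Etens ε ζ Vs i j) t x y
      = (∫ z in (-1:ℝ)..(ε * ζ t x y), (pt4 (Vs i) t x y z * Vs j t x y z + Vs i t x y z * pt4 (Vs j) t x y z)) + ε * pt3 ζ t x y * (Vs i t x y (ε * ζ t x y) * Vs j t x y (ε * ζ t x y)) := by
    have hL : deriv (fun s => ∫ z in (-1:ℝ)..(ε * ζ s x y), Vs i s x y z * Vs j s x y z) t
        = (∫ z in (-1:ℝ)..(ε * ζ t x y), deriv (fun u => Vs i u x y z * Vs j u x y z) t)
          + ε * pt3 ζ t x y * (Vs i t x y (ε * ζ t x y) * Vs j t x y (ε * ζ t x y)) :=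
      (hasDerivAt_leibniz (f := fun s z => Vs i s x y z * Vs j s x y z)
        (by fun_prop) (-1) t hgT).deriv
    have he : ∀ z : ℝ, deriv (fun u => Vs i u x y z * Vs j u x y z) t
        = pt4 (Vs i) t x y z * Vs j t x y z + Vs i t x y z * pt4 (Vs j) t x y z := by
      intro z; rw [deriv_fun_mul (hdT i z) (hdT j z)]; rfl
    calc pt3 (Etens ε ζ Vs i j) t x y
        = deriv (fun s => ∫ z in (-1:ℝ)..(ε * ζ s x y), Vs i s x y z * Vs j s x y z) t := rfl
      _ = (∫ z in (-1:ℝ)..(ε * ζ t x y), deriv (fun u => Vs i u x y z * Vs j u x y z) t)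
          + ε * pt3 ζ t x y * (Vs i t x y (ε * ζ t x y) * Vs j t x y (ε * ζ t x y)) := hL
      _ = _ := by rw [intervalIntegral.integral_congr
            (g := fun z => pt4 (Vs i) t x y z * Vs j t x y z + Vs i t x y z * pt4 (Vs j) t x y z) fun z _ => he z]
  have h20 : pd3 0 (Etens ε ζ Vs i j) t x y
      = (∫ z in (-1:ℝ)..(ε * ζ t x y), (pd4 0 (Vs i) t x y z * Vs j t x y z + Vs i t x y z * pd4 0 (Vs j) t x y z)) + ε * pd3 0 ζ t x y * (Vs i t x y (ε * ζ t x y) * Vs j t x y (ε * ζ t x y)) := by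
    have hL : deriv (fun s => ∫ z in (-1:ℝ)..(ε * ζ t s y), Vs i t s y z * Vs j t s y z) x
        = (∫ z in (-1:ℝ)..(ε * ζ t x y), deriv (fun u => Vs i t u y z * Vs j t u y z) x)
          + ε * pd3 0 ζ t x y * (Vs i t x y (ε * ζ t x y) * Vs j t x y (ε * ζ t x y)) :=
      (hasDerivAt_leibniz (f := fun s z => Vs i t s y z * Vs j t s y z)
        (by fun_prop) (-1) x hgX).deriv
    have he : ∀ z : ℝ, deriv (fun u => Vs i t u y z * Vs j t u y z) x
        = pd4 0 (Vs i) t x y z * Vs j t x y z + Vs i t x y z * pd4 0 (Vs j) t x y z := by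
      intro z; rw [deriv_fun_mul (hdX i z) (hdX j z)]; rfl
    calc pd3 0 (Etens ε ζ Vs i j) t x y
        = deriv (fun s => ∫ z in (-1:ℝ)..(ε * ζ t s y), Vs i t s y z * Vs j t s y z) x := by
          simp [pd3, Etens]
      _ = (∫ z in (-1:ℝ)..(ε * ζ t x y), deriv (fun u => Vs i t u y z * Vs j t u y z) x)
          + ε * pd3 0 ζ t x y * (Vs i t x y (ε * ζ t x y) * Vs j t x y (ε * ζ t x y)) := hL
      _ = _ := by rw [intervalIntegral.integral_congr
            (g := fun z => pd4 0 (Vs i) t x y z * Vs j t x y z + Vs i t x y z * pd4 0 (Vs j) t x y z) fun z _ => he z]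
  have h21 : pd3 1 (Etens ε ζ Vs i j) t x y
      = (∫ z in (-1:ℝ)..(ε * ζ t x y), (pd4 1 (Vs i) t x y z * Vs j t x y z + Vs i t x y z * pd4 1 (Vs j) t x y z)) + ε * pd3 1 ζ t x y * (Vs i t x y (ε * ζ t x y) * Vs j t x y (ε * ζ t x y)) := by
    have hL : deriv (fun s => ∫ z in (-1:ℝ)..(ε * ζ t x s), Vs i t x s z * Vs j t x s z) y
        = (∫ z in (-1:ℝ)..(ε * ζ t x y), deriv (fun u => Vs i t x u z * Vs j t x u z) y)
          + ε * pd3 1 ζ t x y * (Vs i t x y (ε * ζ t x y) * Vs j t x y (ε * ζ t x y)) :=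
      (hasDerivAt_leibniz (f := fun s z => Vs i t x s z * Vs j t x s z)
        (by fun_prop) (-1) y hgY).deriv
    have he : ∀ z : ℝ, deriv (fun u => Vs i t x u z * Vs j t x u z) y
        = pd4 1 (Vs i) t x y z * Vs j t x y z + Vs i t x y z * pd4 1 (Vs j) t x y z := by
      intro z; rw [deriv_fun_mul (hdY i z) (hdY j z)]; rfl
    calc pd3 1 (Etens ε ζ Vs i j) t x y
        = deriv (fun s => ∫ z in (-1:ℝ)..(ε * ζ t x s), Vs i t x s z * Vs j t x s z) y := by
          simp [pd3, Etens]
      _ = (∫ z in (-1:ℝ)..(ε * ζ t x y), deriv (fun u => Vs i t x u z * Vs j t x u z) y)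
          + ε * pd3 1 ζ t x y * (Vs i t x y (ε * ζ t x y) * Vs j t x y (ε * ζ t x y)) := hL
      _ = _ := by rw [intervalIntegral.integral_congr
            (g := fun z => pd4 1 (Vs i) t x y z * Vs j t x y z + Vs i t x y z * pd4 1 (Vs j) t x y z) fun z _ => he z]
  have h30 : pd3 0 (Ftens ε ζ Vs i j 0) t x y
      = (∫ z in (-1:ℝ)..(ε * ζ t x y), ((pd4 0 (Vs i) t x y z * Vs j t x y z + Vs i t x y z * pd4 0 (Vs j) t x y z) * Vs 0 t x y z + Vs i t x y z * Vs j t x y z * pd4 0 (Vs 0) t x y z)) + ε * pd3 0 ζ t x y * (Vs i t x y (ε * ζ t x y) * Vs j t x y (ε * ζ t x y) * Vs 0 t x y (ε * ζ t x y)) := by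
    have hL : deriv (fun s => ∫ z in (-1:ℝ)..(ε * ζ t s y), Vs i t s y z * Vs j t s y z * Vs 0 t s y z) x
        = (∫ z in (-1:ℝ)..(ε * ζ t x y), deriv (fun u => Vs i t u y z * Vs j t u y z * Vs 0 t u y z) x)
          + ε * pd3 0 ζ t x y * (Vs i t x y (ε * ζ t x y) * Vs j t x y (ε * ζ t x y) * Vs 0 t x y (ε * ζ t x y)) :=
      (hasDerivAt_leibniz (f := fun s z => Vs i t s y z * Vs j t s y z * Vs 0 t s y z)
        (by fun_prop) (-1) x hgX).deriv
    have he : ∀ z : ℝ, deriv (fun u => Vs i t u y z * Vs j t u y z * Vs 0 t u y z) x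
        = (pd4 0 (Vs i) t x y z * Vs j t x y z + Vs i t x y z * pd4 0 (Vs j) t x y z) * Vs 0 t x y z + Vs i t x y z * Vs j t x y z * pd4 0 (Vs 0) t x y z := by
      intro z
      rw [deriv_fun_mul (show DifferentiableAt ℝ (fun u => Vs i t u y z * Vs j t u y z) x from (hdX i z).mul (hdX j z)) (hdX 0 z), deriv_fun_mul (hdX i z) (hdX j z)]
      rfl
    calc pd3 0 (Ftens ε ζ Vs i j 0) t x y
        = deriv (fun s => ∫ z in (-1:ℝ)..(ε * ζ t s y), Vs i t s y z * Vs j t s y z * Vs 0 t s y z) x := by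
          simp [pd3, Ftens]
      _ = (∫ z in (-1:ℝ)..(ε * ζ t x y), deriv (fun u => Vs i t u y z * Vs j t u y z * Vs 0 t u y z) x)
          + ε * pd3 0 ζ t x y * (Vs i t x y (ε * ζ t x y) * Vs j t x y (ε * ζ t x y) * Vs 0 t x y (ε * ζ t x y)) := hL
      _ = _ := by rw [intervalIntegral.integral_congr
            (g := fun z => (pd4 0 (Vs i) t x y z * Vs j t x y z + Vs i t x y z * pd4 0 (Vs j) t x y z) * Vs 0 t x y z + Vs i t x y z * Vs j t x y z * pd4 0 (Vs 0) t x y z) fun z _ => he z]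
  have h31 : pd3 1 (Ftens ε ζ Vs i j 1) t x y
      = (∫ z in (-1:ℝ)..(ε * ζ t x y), ((pd4 1 (Vs i) t x y z * Vs j t x y z + Vs i t x y z * pd4 1 (Vs j) t x y z) * Vs 1 t x y z + Vs i t x y z * Vs j t x y z * pd4 1 (Vs 1) t x y z)) + ε * pd3 1 ζ t x y * (Vs i t x y (ε * ζ t x y) * Vs j t x y (ε * ζ t x y) * Vs 1 t x y (ε * ζ t x y)) := by
    have hL : deriv (fun s => ∫ z in (-1:ℝ)..(ε * ζ t x s), Vs i t x s z * Vs j t x s z * Vs 1 t x s z) y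
        = (∫ z in (-1:ℝ)..(ε * ζ t x y), deriv (fun u => Vs i t x u z * Vs j t x u z * Vs 1 t x u z) y)
          + ε * pd3 1 ζ t x y * (Vs i t x y (ε * ζ t x y) * Vs j t x y (ε * ζ t x y) * Vs 1 t x y (ε * ζ t x y)) :=
      (hasDerivAt_leibniz (f := fun s z => Vs i t x s z * Vs j t x s z * Vs 1 t x s z)
        (by fun_prop) (-1) y hgY).deriv
    have he : ∀ z : ℝ, deriv (fun u => Vs i t x u z * Vs j t x u z * Vs 1 t x u z) y
        = (pd4 1 (Vs i) t x y z * Vs j t x y z + Vs i t x y z * pd4 1 (Vs j) t x y z) * Vs 1 t x y z + Vs i t x y z * Vs j t x y z * pd4 1 (Vs 1) t x y z := by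
      intro z
      rw [deriv_fun_mul (show DifferentiableAt ℝ (fun u => Vs i t x u z * Vs j t x u z) y from (hdY i z).mul (hdY j z)) (hdY 1 z), deriv_fun_mul (hdY i z) (hdY j z)]
      rfl
    calc pd3 1 (Ftens ε ζ Vs i j 1) t x y
        = deriv (fun s => ∫ z in (-1:ℝ)..(ε * ζ t x s), Vs i t x s z * Vs j t x s z * Vs 1 t x s z) y := by
          simp [pd3, Ftens]
      _ = (∫ z in (-1:ℝ)..(ε * ζ t x y), deriv (fun u => Vs i t x u z * Vs j t x u z * Vs 1 t x u z) y)
          + ε * pd3 1 ζ t x y * (Vs i t x y (ε * ζ t x y) * Vs j t x y (ε * ζ t x y) * Vs 1 t x y (ε * ζ t x y)) := hL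
      _ = _ := by rw [intervalIntegral.integral_congr
            (g := fun z => (pd4 1 (Vs i) t x y z * Vs j t x y z + Vs i t x y z * pd4 1 (Vs j) t x y z) * Vs 1 t x y z + Vs i t x y z * Vs j t x y z * pd4 1 (Vs 1) t x y z) fun z _ => he z]
  have h40 : (∫ z in (-1:ℝ)..(ε * ζ t x y), pd4 0 (Vs 0) t x y z) + ε * pd3 0 ζ t x y * Vs 0 t x y (ε * ζ t x y) = 0 := by
    have hL : deriv (fun s => ∫ z in (-1:ℝ)..(ε * ζ t s y), Vs 0 t s y z) x
        = (∫ z in (-1:ℝ)..(ε * ζ t x y), deriv (fun u => Vs 0 t u y z) x)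
          + ε * pd3 0 ζ t x y * Vs 0 t x y (ε * ζ t x y) :=
      (hasDerivAt_leibniz (f := fun s z => Vs 0 t s y z) (by fun_prop) (-1) x hgX).deriv
    have h0 : deriv (fun s => ∫ z in (-1:ℝ)..(ε * ζ t s y), Vs 0 t s y z) x = 0 := by
      have hfun : (fun s => ∫ z in (-1:ℝ)..(ε * ζ t s y), Vs 0 t s y z) = fun _ => (0:ℝ) :=
        funext fun s => hmean 0 t s y
      rw [hfun]; exact deriv_const x 0
    rw [h0] at hL
    have he : (∫ z in (-1:ℝ)..(ε * ζ t x y), deriv (fun u => Vs 0 t u y z) x) = (∫ z in (-1:ℝ)..(ε * ζ t x y), pd4 0 (Vs 0) t x y z) :=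
      intervalIntegral.integral_congr fun z _ => rfl
    rw [he] at hL
    linarith
  have h41 : (∫ z in (-1:ℝ)..(ε * ζ t x y), pd4 1 (Vs 1) t x y z) + ε * pd3 1 ζ t x y * Vs 1 t x y (ε * ζ t x y) = 0 := by
    have hL : deriv (fun s => ∫ z in (-1:ℝ)..(ε * ζ t x s), Vs 1 t x s z) y
        = (∫ z in (-1:ℝ)..(ε * ζ t x y), deriv (fun u => Vs 1 t x u z) y)
          + ε * pd3 1 ζ t x y * Vs 1 t x y (ε * ζ t x y) :=
      (hasDerivAt_leibniz (f := fun s z => Vs 1 t x s z) (by fun_prop) (-1) y hgY).deriv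
    have h0 : deriv (fun s => ∫ z in (-1:ℝ)..(ε * ζ t x s), Vs 1 t x s z) y = 0 := by
      have hfun : (fun s => ∫ z in (-1:ℝ)..(ε * ζ t x s), Vs 1 t x s z) = fun _ => (0:ℝ) :=
        funext fun s => hmean 1 t x s
      rw [hfun]; exact deriv_const y 0
    rw [h0] at hL
    have he : (∫ z in (-1:ℝ)..(ε * ζ t x y), deriv (fun u => Vs 1 t x u z) y) = (∫ z in (-1:ℝ)..(ε * ζ t x y), pd4 1 (Vs 1) t x y z) :=
      intervalIntegral.integral_congr fun z _ => rfl
    rw [he] at hL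
    linarith
  have h50 : ∀ z : ℝ, pd3 0 (fun t' x' y' => ∫ zp in (-1:ℝ)..z, (Vb 0 t' x' y' + Real.sqrt μ * Vs 0 t' x' y' zp)) t x y
      = (z + 1) * pd3 0 (Vb 0) t x y + Real.sqrt μ * ∫ zp in (-1:ℝ)..z, pd4 0 (Vs 0) t x y zp := by
    intro z
    have hL : deriv (fun u => ∫ zp in (-1:ℝ)..z, (Vb 0 t u y + Real.sqrt μ * Vs 0 t u y zp)) x
        = (∫ zp in (-1:ℝ)..z, deriv (fun u => Vb 0 t u y + Real.sqrt μ * Vs 0 t u y zp) x)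
          + 0 * (Vb 0 t x y + Real.sqrt μ * Vs 0 t x y z) :=
      (hasDerivAt_leibniz (f := fun u zp => Vb 0 t u y + Real.sqrt μ * Vs 0 t u y zp)
        (by fun_prop) (-1) x (hasDerivAt_const x z)).deriv
    have he : ∀ zp : ℝ, deriv (fun u => Vb 0 t u y + Real.sqrt μ * Vs 0 t u y zp) x
        = pd3 0 (Vb 0) t x y + Real.sqrt μ * pd4 0 (Vs 0) t x y zp := by
      intro zp
      rw [deriv_fun_add (hbX 0) ((hdX 0 zp).const_mul _), deriv_const_mul _ (hdX 0 zp)]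
      rfl
    calc pd3 0 (fun t' x' y' => ∫ zp in (-1:ℝ)..z, (Vb 0 t' x' y' + Real.sqrt μ * Vs 0 t' x' y' zp)) t x y
        = deriv (fun u => ∫ zp in (-1:ℝ)..z, (Vb 0 t u y + Real.sqrt μ * Vs 0 t u y zp)) x := by
          simp [pd3]
      _ = (∫ zp in (-1:ℝ)..z, deriv (fun u => Vb 0 t u y + Real.sqrt μ * Vs 0 t u y zp) x)
          + 0 * (Vb 0 t x y + Real.sqrt μ * Vs 0 t x y z) := hL
      _ = (∫ zp in (-1:ℝ)..z, (pd3 0 (Vb 0) t x y + Real.sqrt μ * pd4 0 (Vs 0) t x y zp))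
          + 0 * (Vb 0 t x y + Real.sqrt μ * Vs 0 t x y z) := by
          rw [intervalIntegral.integral_congr
            (g := fun zp => pd3 0 (Vb 0) t x y + Real.sqrt μ * pd4 0 (Vs 0) t x y zp) fun zp _ => he zp]
      _ = _ := by
          rw [intervalIntegral.integral_add intervalIntegrable_const
            ((show Continuous fun zp => Real.sqrt μ * pd4 0 (Vs 0) t x y zp from continuous_const.mul (hc0 0)).intervalIntegrable _ _),
            intervalIntegral.integral_const, intervalIntegral.integral_const_mul]
          simp only [smul_eq_mul, sub_neg_eq_add]
          ring
  have h51 : ∀ z : ℝ, pd3 1 (fun t' x' y' => ∫ zp in (-1:ℝ)..z, (Vb 1 t' x' y' + Real.sqrt μ * Vs 1 t' x' y' zp)) t x y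
      = (z + 1) * pd3 1 (Vb 1) t x y + Real.sqrt μ * ∫ zp in (-1:ℝ)..z, pd4 1 (Vs 1) t x y zp := by
    intro z
    have hL : deriv (fun u => ∫ zp in (-1:ℝ)..z, (Vb 1 t x u + Real.sqrt μ * Vs 1 t x u zp)) y
        = (∫ zp in (-1:ℝ)..z, deriv (fun u => Vb 1 t x u + Real.sqrt μ * Vs 1 t x u zp) y)
          + 0 * (Vb 1 t x y + Real.sqrt μ * Vs 1 t x y z) :=
      (hasDerivAt_leibniz (f := fun u zp => Vb 1 t x u + Real.sqrt μ * Vs 1 t x u zp)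
        (by fun_prop) (-1) y (hasDerivAt_const y z)).deriv
    have he : ∀ zp : ℝ, deriv (fun u => Vb 1 t x u + Real.sqrt μ * Vs 1 t x u zp) y
        = pd3 1 (Vb 1) t x y + Real.sqrt μ * pd4 1 (Vs 1) t x y zp := by
      intro zp
      rw [deriv_fun_add (hbY 1) ((hdY 1 zp).const_mul _), deriv_const_mul _ (hdY 1 zp)]
      rfl
    calc pd3 1 (fun t' x' y' => ∫ zp in (-1:ℝ)..z, (Vb 1 t' x' y' + Real.sqrt μ * Vs 1 t' x' y' zp)) t x y
        = deriv (fun u => ∫ zp in (-1:ℝ)..z, (Vb 1 t x u + Real.sqrt μ * Vs 1 t x u zp)) y := by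
          simp [pd3]
      _ = (∫ zp in (-1:ℝ)..z, deriv (fun u => Vb 1 t x u + Real.sqrt μ * Vs 1 t x u zp) y)
          + 0 * (Vb 1 t x y + Real.sqrt μ * Vs 1 t x y z) := hL
      _ = (∫ zp in (-1:ℝ)..z, (pd3 1 (Vb 1) t x y + Real.sqrt μ * pd4 1 (Vs 1) t x y zp))
          + 0 * (Vb 1 t x y + Real.sqrt μ * Vs 1 t x y z) := by
          rw [intervalIntegral.integral_congr
            (g := fun zp => pd3 1 (Vb 1) t x y + Real.sqrt μ * pd4 1 (Vs 1) t x y zp) fun zp _ => he zp]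
      _ = _ := by
          rw [intervalIntegral.integral_add intervalIntegrable_const
            ((show Continuous fun zp => Real.sqrt μ * pd4 1 (Vs 1) t x y zp from continuous_const.mul (hc1 1)).intervalIntegrable _ _),
            intervalIntegral.integral_const, intervalIntegral.integral_const_mul]
          simp only [smul_eq_mul, sub_neg_eq_add]
          ring
  have hci := hc i
  have hcj := hc j
  have hcO := hc 0
  have hcI := hc 1
  have hcti := hct i
  have hctj := hct j
  have hc0i := hc0 i
  have hc0j := hc0 j
  have hc00 := hc0 0
  have hc1i := hc1 i
  have hc1j := hc1 j
  have hc11 := hc1 1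
  have hczi := hcz i
  have hczj := hcz j
  have hI0d : ∀ w : ℝ, HasDerivAt (fun s : ℝ => ∫ zp in (-1:ℝ)..s, pd4 0 (Vs 0) t x y zp)
      (pd4 0 (Vs 0) t x y w) w := fun w =>
    intervalIntegral.integral_hasDerivAt_right ((hc0 0).intervalIntegrable _ _)
      ((hc0 0).stronglyMeasurable.stronglyMeasurableAtFilter) (hc0 0).continuousAt
  have hI0c : Continuous (fun s : ℝ => ∫ zp in (-1:ℝ)..s, pd4 0 (Vs 0) t x y zp) :=
    continuous_iff_continuousAt.mpr fun w => (hI0d w).continuousAt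
  have hI1d : ∀ w : ℝ, HasDerivAt (fun s : ℝ => ∫ zp in (-1:ℝ)..s, pd4 1 (Vs 1) t x y zp)
      (pd4 1 (Vs 1) t x y w) w := fun w =>
    intervalIntegral.integral_hasDerivAt_right ((hc1 1).intervalIntegrable _ _)
      ((hc1 1).stronglyMeasurable.stronglyMeasurableAtFilter) (hc1 1).continuousAt
  have hI1c : Continuous (fun s : ℝ => ∫ zp in (-1:ℝ)..s, pd4 1 (Vs 1) t x y zp) :=
    continuous_iff_continuousAt.mpr fun w => (hI1d w).continuousAt
  have hWd : ∀ z : ℝ, HasDerivAt (fun z : ℝ => (((z + 1) * pd3 0 (Vb 0) t x y + Real.sqrt μ * ∫ zp in (-1:ℝ)..z, pd4 0 (Vs 0) t x y zp) + ((z + 1) * pd3 1 (Vb 1) t x y + Real.sqrt μ * ∫ zp in (-1:ℝ)..z, pd4 1 (Vs 1) t x y zp))) ((pd3 0 (Vb 0) t x y + Real.sqrt μ * pd4 0 (Vs 0) t x y z) + (pd3 1 (Vb 1) t x y + Real.sqrt μ * pd4 1 (Vs 1) t x y z)) z := by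
    intro z
    have hA : HasDerivAt (fun z : ℝ => (z + 1) * pd3 0 (Vb 0) t x y) (1 * pd3 0 (Vb 0) t x y) z :=
      ((hasDerivAt_id z).add_const 1).mul_const _
    have hB := (hI0d z).const_mul (Real.sqrt μ)
    have hC : HasDerivAt (fun z : ℝ => (z + 1) * pd3 1 (Vb 1) t x y) (1 * pd3 1 (Vb 1) t x y) z :=
      ((hasDerivAt_id z).add_const 1).mul_const _
    have hD := (hI1d z).const_mul (Real.sqrt μ)
    have hh := (hA.add hB).add (hC.add hD)
    simpa only [one_mul, Pi.add_def] using hh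
  have hibp : (∫ z in (-1:ℝ)..(ε * ζ t x y), (((z + 1) * pd3 0 (Vb 0) t x y + Real.sqrt μ * ∫ zp in (-1:ℝ)..z, pd4 0 (Vs 0) t x y zp) + ((z + 1) * pd3 1 (Vb 1) t x y + Real.sqrt μ * ∫ zp in (-1:ℝ)..z, pd4 1 (Vs 1) t x y zp)) * (pz (Vs i) t x y z * Vs j t x y z + Vs i t x y z * pz (Vs j) t x y z))
      = ((((ε * ζ t x y) + 1) * pd3 0 (Vb 0) t x y + Real.sqrt μ * ∫ zp in (-1:ℝ)..(ε * ζ t x y), pd4 0 (Vs 0) t x y zp) + (((ε * ζ t x y) + 1) * pd3 1 (Vb 1) t x y + Real.sqrt μ * ∫ zp in (-1:ℝ)..(ε * ζ t x y), pd4 1 (Vs 1) t x y zp)) * (Vs i t x y (ε * ζ t x y) * Vs j t x y (ε * ζ t x y))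
        - ((((-1:ℝ) + 1) * pd3 0 (Vb 0) t x y + Real.sqrt μ * ∫ zp in (-1:ℝ)..(-1:ℝ), pd4 0 (Vs 0) t x y zp) + (((-1:ℝ) + 1) * pd3 1 (Vb 1) t x y + Real.sqrt μ * ∫ zp in (-1:ℝ)..(-1:ℝ), pd4 1 (Vs 1) t x y zp)) * (Vs i t x y (-1:ℝ) * Vs j t x y (-1:ℝ))
        - (∫ z in (-1:ℝ)..(ε * ζ t x y), ((pd3 0 (Vb 0) t x y + Real.sqrt μ * pd4 0 (Vs 0) t x y z) + (pd3 1 (Vb 1) t x y + Real.sqrt μ * pd4 1 (Vs 1) t x y z)) * (Vs i t x y z * Vs j t x y z)) :=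
    intervalIntegral.integral_mul_deriv_eq_deriv_mul
      (fun z _ => hWd z)
      (fun z _ => (hdZ i z).mul (hdZ j z))
      ((by fun_prop : Continuous fun z : ℝ => ((pd3 0 (Vb 0) t x y + Real.sqrt μ * pd4 0 (Vs 0) t x y z) + (pd3 1 (Vb 1) t x y + Real.sqrt μ * pd4 1 (Vs 1) t x y z))).intervalIntegrable _ _)
      ((by fun_prop : Continuous fun z : ℝ => (pz (Vs i) t x y z * Vs j t x y z + Vs i t x y z * pz (Vs j) t x y z)).intervalIntegrable _ _)
  have hWm1 : ((((-1:ℝ) + 1) * pd3 0 (Vb 0) t x y + Real.sqrt μ * ∫ zp in (-1:ℝ)..(-1:ℝ), pd4 0 (Vs 0) t x y zp) + (((-1:ℝ) + 1) * pd3 1 (Vb 1) t x y + Real.sqrt μ * ∫ zp in (-1:ℝ)..(-1:ℝ), pd4 1 (Vs 1) t x y zp)) = 0 := by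
    simp
  have h6 : (∫ z in (-1:ℝ)..(ε * ζ t x y), (((z + 1) * pd3 0 (Vb 0) t x y + Real.sqrt μ * ∫ zp in (-1:ℝ)..z, pd4 0 (Vs 0) t x y zp) + ((z + 1) * pd3 1 (Vb 1) t x y + Real.sqrt μ * ∫ zp in (-1:ℝ)..z, pd4 1 (Vs 1) t x y zp)) * (pz (Vs i) t x y z * Vs j t x y z + Vs i t x y z * pz (Vs j) t x y z))
      = ((((ε * ζ t x y) + 1) * pd3 0 (Vb 0) t x y + Real.sqrt μ * ∫ zp in (-1:ℝ)..(ε * ζ t x y), pd4 0 (Vs 0) t x y zp) + (((ε * ζ t x y) + 1) * pd3 1 (Vb 1) t x y + Real.sqrt μ * ∫ zp in (-1:ℝ)..(ε * ζ t x y), pd4 1 (Vs 1) t x y zp)) * (Vs i t x y (ε * ζ t x y) * Vs j t x y (ε * ζ t x y)) - (∫ z in (-1:ℝ)..(ε * ζ t x y), ((pd3 0 (Vb 0) t x y + Real.sqrt μ * pd4 0 (Vs 0) t x y z) + (pd3 1 (Vb 1) t x y + Real.sqrt μ * pd4 1 (Vs 1) t x y z)) * (Vs i t x y z * Vs j t x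 y z)) := by
    rw [hibp, hWm1]; ring
  have h7 : (∫ z in (-1:ℝ)..(ε * ζ t x y), ((pd3 0 (Vb 0) t x y + Real.sqrt μ * pd4 0 (Vs 0) t x y z) + (pd3 1 (Vb 1) t x y + Real.sqrt μ * pd4 1 (Vs 1) t x y z)) * (Vs i t x y z * Vs j t x y z))
      = (pd3 0 (Vb 0) t x y + pd3 1 (Vb 1) t x y) * Etens ε ζ Vs i j t x y
        + Real.sqrt μ * ((∫ z in (-1:ℝ)..(ε * ζ t x y), Vs i t x y z * Vs j t x y z * pd4 0 (Vs 0) t x y z) + (∫ z in (-1:ℝ)..(ε * ζ t x y), Vs i t x y z * Vs j t x y z * pd4 1 (Vs 1) t x y z)) := by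
    have e1 : (∫ z in (-1:ℝ)..(ε * ζ t x y), ((pd3 0 (Vb 0) t x y + Real.sqrt μ * pd4 0 (Vs 0) t x y z) + (pd3 1 (Vb 1) t x y + Real.sqrt μ * pd4 1 (Vs 1) t x y z)) * (Vs i t x y z * Vs j t x y z))
        = ∫ z in (-1:ℝ)..(ε * ζ t x y), ((pd3 0 (Vb 0) t x y + pd3 1 (Vb 1) t x y) * (Vs i t x y z * Vs j t x y z)
            + (Real.sqrt μ * (Vs i t x y z * Vs j t x y z * pd4 0 (Vs 0) t x y z)
              + Real.sqrt μ * (Vs i t x y z * Vs j t x y z * pd4 1 (Vs 1) t x y z))) :=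
      intervalIntegral.integral_congr fun z _ => by ring
    have hEij : (∫ z in (-1:ℝ)..(ε * ζ t x y), Vs i t x y z * Vs j t x y z) = Etens ε ζ Vs i j t x y := rfl
    rw [e1]
    simp (disch := fun_prop) only [iadd, intervalIntegral.integral_const_mul]
    rw [hEij]
    ring
  have h8 : ∀ m : Fin 2, (∫ z in (-1:ℝ)..(ε * ζ t x y), (-(1/2) * ((1 + z)^2 - (1 + ε * ζ t x y)^2 / 3)) * Vs m t x y z)
      = -((1 + ε * ζ t x y)^3 / 24) * Vsharp ε ζ Vs m t x y := by
    intro m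
    have hcm := hc m
    have ht : (∫ z in (-1:ℝ)..(ε * ζ t x y), ∫ zp in z..(ε * ζ t x y), ∫ zq in (-1:ℝ)..zp, Vs m t x y zq)
        = -(1/2) * ∫ z in (-1:ℝ)..(ε * ζ t x y), (1 + z)^2 * Vs m t x y z :=
      triple_integral_eq (fun z => Vs m t x y z) hcm (ε * ζ t x y) (hmean m t x y)
    have e1 : (∫ z in (-1:ℝ)..(ε * ζ t x y), (-(1/2) * ((1 + z)^2 - (1 + ε * ζ t x y)^2 / 3)) * Vs m t x y z)
        = ∫ z in (-1:ℝ)..(ε * ζ t x y), (-(1/2) * ((1 + z)^2 * Vs m t x y z)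
            + ((1 + ε * ζ t x y)^2 / 6) * Vs m t x y z) :=
      intervalIntegral.integral_congr fun z _ => by ring
    have hVsh : Vsharp ε ζ Vs m t x y
        = -(24 / (1 + ε * ζ t x y)^3) *
            ∫ z in (-1:ℝ)..(ε * ζ t x y), ∫ zp in z..(ε * ζ t x y), ∫ zq in (-1:ℝ)..zp, Vs m t x y zq := rfl
    have hkey : -((1 + ε * ζ t x y)^3 / 24) * (-(24 / (1 + ε * ζ t x y)^3) *
          ∫ z in (-1:ℝ)..(ε * ζ t x y), ∫ zp in z..(ε * ζ t x y), ∫ zq in (-1:ℝ)..zp, Vs m t x y zq)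
        = ∫ z in (-1:ℝ)..(ε * ζ t x y), ∫ zp in z..(ε * ζ t x y), ∫ zq in (-1:ℝ)..zp, Vs m t x y zq := by
      field_simp
    rw [e1]
    simp (disch := fun_prop) only [iadd, intervalIntegral.integral_const_mul]
    rw [hmean m t x y, hVsh, hkey, ← ht]
    ring
  have h9 : (∫ z in (-1:ℝ)..(ε * ζ t x y), ((pt4 (Vs i) t x y z + ε * (Vb 0 t x y * pd4 0 (Vs i) t x y z + Vb 1 t x y * pd4 1 (Vs i) t x y z) + ε * (Vs 0 t x y z * pd3 0 (Vb i) t x y + Vs 1 t x y z * pd3 1 (Vb i) t x y) + ε * Real.sqrt μ * ((Vs 0 t x y z * pd4 0 (Vs i) t x y z + Vs 1 t x y z * pd4 1 (Vs i) t x y z) - (1 + ε * ζ t x y)⁻¹ * (pd3 0 (fun t' x' y' => Etens ε ζ Vs i 0 t' x' y') t x y + pd3 1 (fun t' x' y' => Etens ε ζ Vs i 1 t' x' y') t x y))) * Vs j t x y z + (pt4 (Vs j) t x y z + ε * (Vb 0 t x y * pd4 0 (Vs j) t x y z + Vb 1 t x y * pd4 1 (Vs j) t x y z) + ε * (Vs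 0 t x y z * pd3 0 (Vb j) t x y + Vs 1 t x y z * pd3 1 (Vb j) t x y) + ε * Real.sqrt μ * ((Vs 0 t x y z * pd4 0 (Vs j) t x y z + Vs 1 t x y z * pd4 1 (Vs j) t x y z) - (1 + ε * ζ t x y)⁻¹ * (pd3 0 (fun t' x' y' => Etens ε ζ Vs j 0 t' x' y') t x y + pd3 1 (fun t' x' y' => Etens ε ζ Vs j 1 t' x' y') t x y))) * Vs i t x y z))
      = ∫ z in (-1:ℝ)..(ε * ζ t x y), ((ε * (pd3 0 (fun t' x' y' => ∫ zp in (-1:ℝ)..z, (Vb 0 t' x' y' + Real.sqrt μ * Vs 0 t' x' y' zp)) t x y + pd3 1 (fun t' x' y' => ∫ zp in (-1:ℝ)..z, (Vb 1 t' x' y' + Real.sqrt μ * Vs 1 t' x' y' zp)) t x y) * pz (Vs i) t x y z - ε * Real.sqrt μ * (pd3 0 (Vb 1) t x y - pd3 1 (Vb 0) t x y) * (if i = 0 then -((-(1/2) * ((1 + z)^2 - (1 + ε * ζ t x y)^2 / 3)) * pd3 1 (fun t' x' y' => divVb Vb t' x' y') t x y) else (-(1/2) * ((1 + z)^2 - (1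 + ε * ζ t x y)^2 / 3)) * pd3 0 (fun t' x' y' => divVb Vb t' x' y') t x y)) * Vs j t x y z + (ε * (pd3 0 (fun t' x' y' => ∫ zp in (-1:ℝ)..z, (Vb 0 t' x' y' + Real.sqrt μ * Vs 0 t' x' y' zp)) t x y + pd3 1 (fun t' x' y' => ∫ zp in (-1:ℝ)..z, (Vb 1 t' x' y' + Real.sqrt μ * Vs 1 t' x' y' zp)) t x y) * pz (Vs j) t x y z - ε * Real.sqrt μ * (pd3 0 (Vb 1) t x y - pd3 1 (Vb 0) t x y) * (if j = 0 then -((-(1/2) * ((1 + z)^2 - (1 + ε * ζ t x y)^2 / 3)) * pd3 1 (fun t' x' y' => divVb Vb t' x' y') t x y) else (-(1/2) * ((1 + z)^2 - (1 + ε * ζ t x y)^2 / 3)) * pd3 0 (fun t' x' y' => divVb Vb t' x' y') t x y)) * Vs i t x y z) := by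
    refine intervalIntegral.integral_congr fun z hz => ?_
    rw [Set.uIcc_of_le hle] at hz
    have e1 := heq i t x y z hz.1 hz.2
    have e2 := heq j t x y z hz.1 hz.2
    simp only [Fin.sum_univ_two] at e1 e2
    linear_combination e1 * Vs j t x y z + e2 * Vs i t x y z
  have hE0j : (∫ z in (-1:ℝ)..(ε * ζ t x y), Vs 0 t x y z * Vs j t x y z) = Etens ε ζ Vs 0 j t x y := rfl
  have hE1j : (∫ z in (-1:ℝ)..(ε * ζ t x y), Vs 1 t x y z * Vs j t x y z) = Etens ε ζ Vs 1 j t x y := rfl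
  have hEi0 : (∫ z in (-1:ℝ)..(ε * ζ t x y), Vs i t x y z * Vs 0 t x y z) = Etens ε ζ Vs i 0 t x y := rfl
  have hEi1 : (∫ z in (-1:ℝ)..(ε * ζ t x y), Vs i t x y z * Vs 1 t x y z) = Etens ε ζ Vs i 1 t x y := rfl
  have h10 : (∫ z in (-1:ℝ)..(ε * ζ t x y), ((pt4 (Vs i) t x y z + ε * (Vb 0 t x y * pd4 0 (Vs i) t x y z + Vb 1 t x y * pd4 1 (Vs i) t x y z) + ε * (Vs 0 t x y z * pd3 0 (Vb i) t x y + Vs 1 t x y z * pd3 1 (Vb i) t x y) + ε * Real.sqrt μ * ((Vs 0 t x y z * pd4 0 (Vs i) t x y z + Vs 1 t x y z * pd4 1 (Vs i) t x y z) - (1 + ε * ζ t x y)⁻¹ * (pd3 0 (fun t' x' y' => Etens ε ζ Vs i 0 t' x' y') t x y + pd3 1 (fun t' x' y' => Etens ε ζ Vs i 1 t' x' y') t x y))) * Vs j t x y z + (pt4 (Vs j) t x y z + ε * (Vb 0 t x y * pd4 0 (Vs j) t x y z + Vb 1 t x y * pd4 1 (Vs j) t x y z) + ε * (Vs 0 t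 x y z * pd3 0 (Vb j) t x y + Vs 1 t x y z * pd3 1 (Vb j) t x y) + ε * Real.sqrt μ * ((Vs 0 t x y z * pd4 0 (Vs j) t x y z + Vs 1 t x y z * pd4 1 (Vs j) t x y z) - (1 + ε * ζ t x y)⁻¹ * (pd3 0 (fun t' x' y' => Etens ε ζ Vs j 0 t' x' y') t x y + pd3 1 (fun t' x' y' => Etens ε ζ Vs j 1 t' x' y') t x y))) * Vs i t x y z))
      = (∫ z in (-1:ℝ)..(ε * ζ t x y), (pt4 (Vs i) t x y z * Vs j t x y z + Vs i t x y z * pt4 (Vs j) t x y z)) + ε * Vb 0 t x y * (∫ z in (-1:ℝ)..(ε * ζ t x y), (pd4 0 (Vs i) t x y z * Vs j t x y z + Vs i t x y z * pd4 0 (Vs j) t x y z)) + ε * Vb 1 t x y * (∫ z in (-1:ℝ)..(ε * ζ t x y), (pd4 1 (Vs i) t x y z * Vs j t x y z + Vs i t x y z * pd4 1 (Vs j) t x y z))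
        + ε * pd3 0 (Vb i) t x y * Etens ε ζ Vs 0 j t x y + ε * pd3 1 (Vb i) t x y * Etens ε ζ Vs 1 j t x y
        + ε * pd3 0 (Vb j) t x y * Etens ε ζ Vs i 0 t x y + ε * pd3 1 (Vb j) t x y * Etens ε ζ Vs i 1 t x y
        + ε * Real.sqrt μ * (∫ z in (-1:ℝ)..(ε * ζ t x y), (pd4 0 (Vs i) t x y z * Vs j t x y z + Vs i t x y z * pd4 0 (Vs j) t x y z) * Vs 0 t x y z) + ε * Real.sqrt μ * (∫ z in (-1:ℝ)..(ε * ζ t x y), (pd4 1 (Vs i) t x y z * Vs j t x y z + Vs i t x y z * pd4 1 (Vs j) t x y z) * Vs 1 t x y z) := by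
    have e1 : (∫ z in (-1:ℝ)..(ε * ζ t x y), ((pt4 (Vs i) t x y z + ε * (Vb 0 t x y * pd4 0 (Vs i) t x y z + Vb 1 t x y * pd4 1 (Vs i) t x y z) + ε * (Vs 0 t x y z * pd3 0 (Vb i) t x y + Vs 1 t x y z * pd3 1 (Vb i) t x y) + ε * Real.sqrt μ * ((Vs 0 t x y z * pd4 0 (Vs i) t x y z + Vs 1 t x y z * pd4 1 (Vs i) t x y z) - (1 + ε * ζ t x y)⁻¹ * (pd3 0 (fun t' x' y' => Etens ε ζ Vs i 0 t' x' y') t x y + pd3 1 (fun t' x' y' => Etens ε ζ Vs i 1 t' x' y') t x y))) * Vs j t x y z + (pt4 (Vs j) t x y z + ε * (Vb 0 t x y * pd4 0 (Vs j) t x y z + Vb 1 t x y * pd4 1 (Vs j) t x y z) + ε * (Vs 0 t x y z * pd3 0 (Vb j) t x y + Vs 1 t x y z * pd3 1 (Vb j) t x y) + ε * Real.sqrt μ * ((Vs 0 t x y z * pd4 0 (Vs j) t x y z + Vs 1 t x y z * pd4 1 (Vs j) t x y z) - (1 + ε * ζ t x y)⁻¹ * (pd3 0 (fun t' x' y' =>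 Etens ε ζ Vs j 0 t' x' y') t x y + pd3 1 (fun t' x' y' => Etens ε ζ Vs j 1 t' x' y') t x y))) * Vs i t x y z))
        = ∫ z in (-1:ℝ)..(ε * ζ t x y), ((pt4 (Vs i) t x y z * Vs j t x y z + Vs i t x y z * pt4 (Vs j) t x y z) + (ε * Vb 0 t x y * (pd4 0 (Vs i) t x y z * Vs j t x y z + Vs i t x y z * pd4 0 (Vs j) t x y z) + (ε * Vb 1 t x y * (pd4 1 (Vs i) t x y z * Vs j t x y z + Vs i t x y z * pd4 1 (Vs j) t x y z) + (ε * pd3 0 (Vb i) t x y * (Vs 0 t x y z * Vs j t x y z) + (ε * pd3 1 (Vb i) t x y * (Vs 1 t x y z * Vs j t x y z) + (ε * pd3 0 (Vb j) t x y * (Vs i t x y z * Vs 0 t x y z) + (ε * pd3 1 (Vb j) t x y * (Vs i t x y z * Vs 1 t x y z) + (ε * Real.sqrt μ * ((pd4 0 (Vs i) t x y z * Vs j t x y z + Vs i t x y z * pd4 0 (Vs j) t x y z) * Vs 0 t x y z) + (ε * Real.sqrt μ * ((pd4 1 (Vs i) t x y z * Vs j t x y z + Vs i t x y z * pd4 1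 (Vs j) t x y z) * Vs 1 t x y z) + ((-(ε * Real.sqrt μ * ((1 + ε * ζ t x y)⁻¹ * (pd3 0 (fun t' x' y' => Etens ε ζ Vs i 0 t' x' y') t x y + pd3 1 (fun t' x' y' => Etens ε ζ Vs i 1 t' x' y') t x y)))) * Vs j t x y z + ((-(ε * Real.sqrt μ * ((1 + ε * ζ t x y)⁻¹ * (pd3 0 (fun t' x' y' => Etens ε ζ Vs j 0 t' x' y') t x y + pd3 1 (fun t' x' y' => Etens ε ζ Vs j 1 t' x' y') t x y)))) * Vs i t x y z))))))))))) :=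
      intervalIntegral.integral_congr fun z _ => by ring
    rw [e1]
    simp (disch := fun_prop) only [iadd, intervalIntegral.integral_const_mul]
    rw [hE0j, hE1j, hEi0, hEi1, hmean i t x y, hmean j t x y]
    ring
  have h11 : (∫ z in (-1:ℝ)..(ε * ζ t x y), ((ε * (pd3 0 (fun t' x' y' => ∫ zp in (-1:ℝ)..z, (Vb 0 t' x' y' + Real.sqrt μ * Vs 0 t' x' y' zp)) t x y + pd3 1 (fun t' x' y' => ∫ zp in (-1:ℝ)..z, (Vb 1 t' x' y' + Real.sqrt μ * Vs 1 t' x' y' zp)) t x y) * pz (Vs i) t x y z - ε * Real.sqrt μ * (pd3 0 (Vb 1) t x y - pd3 1 (Vb 0) t x y) * (if i = 0 then -((-(1/2) * ((1 + z)^2 - (1 + ε * ζ t x y)^2 / 3)) * pd3 1 (fun t' x' y' => divVb Vb t' x' y') t x y) else (-(1/2) * ((1 + z)^2 - (1 + ε * ζ t x y)^2 / 3)) * pd3 0 (fun t' x' y' => divVb Vb t' x' y') t x y)) * Vs j t x y z + (ε * (pd3 0 (fun t' x' y' => ∫ zp in (-1:ℝ)..z, (Vb 0 t' x' y' + Real.sqrt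 μ * Vs 0 t' x' y' zp)) t x y + pd3 1 (fun t' x' y' => ∫ zp in (-1:ℝ)..z, (Vb 1 t' x' y' + Real.sqrt μ * Vs 1 t' x' y' zp)) t x y) * pz (Vs j) t x y z - ε * Real.sqrt μ * (pd3 0 (Vb 1) t x y - pd3 1 (Vb 0) t x y) * (if j = 0 then -((-(1/2) * ((1 + z)^2 - (1 + ε * ζ t x y)^2 / 3)) * pd3 1 (fun t' x' y' => divVb Vb t' x' y') t x y) else (-(1/2) * ((1 + z)^2 - (1 + ε * ζ t x y)^2 / 3)) * pd3 0 (fun t' x' y' => divVb Vb t' x' y') t x y)) * Vs i t x y z))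
      = ε * (∫ z in (-1:ℝ)..(ε * ζ t x y), (((z + 1) * pd3 0 (Vb 0) t x y + Real.sqrt μ * ∫ zp in (-1:ℝ)..z, pd4 0 (Vs 0) t x y zp) + ((z + 1) * pd3 1 (Vb 1) t x y + Real.sqrt μ * ∫ zp in (-1:ℝ)..z, pd4 1 (Vs 1) t x y zp)) * (pz (Vs i) t x y z * Vs j t x y z + Vs i t x y z * pz (Vs j) t x y z))
        - ε * Real.sqrt μ * (pd3 0 (Vb 1) t x y - pd3 1 (Vb 0) t x y) * ((if i = 0 then -(pd3 1 (fun t' x' y' => divVb Vb t' x' y') t x y) else pd3 0 (fun t' x' y' => divVb Vb t' x' y') t x y) * (∫ z in (-1:ℝ)..(ε * ζ t x y), (-(1/2) * ((1 + z)^2 - (1 + ε * ζ t x y)^2 / 3)) * Vs j t x y z) + (if j = 0 then -(pd3 1 (fun t' x' y' => divVb Vb t' x' y') t x y) else pd3 0 (fun t' x' y' => divVb Vb t' x' y') t x y) * (∫ z in (-1:ℝ)..(ε * ζ t x y), (-(1/2) * ((1 + z)^2 - (1 + ε * ζ t x y)^2 / 3)) * Vs i t x y z)) := by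
    have e1 : (∫ z in (-1:ℝ)..(ε * ζ t x y), ((ε * (pd3 0 (fun t' x' y' => ∫ zp in (-1:ℝ)..z, (Vb 0 t' x' y' + Real.sqrt μ * Vs 0 t' x' y' zp)) t x y + pd3 1 (fun t' x' y' => ∫ zp in (-1:ℝ)..z, (Vb 1 t' x' y' + Real.sqrt μ * Vs 1 t' x' y' zp)) t x y) * pz (Vs i) t x y z - ε * Real.sqrt μ * (pd3 0 (Vb 1) t x y - pd3 1 (Vb 0) t x y) * (if i = 0 then -((-(1/2) * ((1 + z)^2 - (1 + ε * ζ t x y)^2 / 3)) * pd3 1 (fun t' x' y' => divVb Vb t' x' y') t x y) else (-(1/2) * ((1 + z)^2 - (1 + ε * ζ t x y)^2 / 3)) * pd3 0 (fun t' x' y' => divVb Vb t' x' y') t x y)) * Vs j t x y z + (ε * (pd3 0 (fun t' x' y' => ∫ zp in (-1:ℝ)..z, (Vb 0 t' x' y' + Real.sqrt μ * Vs 0 t' x' y' zp)) t x y + pd3 1 (fun t' x' y' => ∫ zp in (-1:ℝ)..z, (Vb 1 t' x' y' + Real.sqrt μ * Vs 1 t' x' y' zp)) t x y) * pz (Vs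 j) t x y z - ε * Real.sqrt μ * (pd3 0 (Vb 1) t x y - pd3 1 (Vb 0) t x y) * (if j = 0 then -((-(1/2) * ((1 + z)^2 - (1 + ε * ζ t x y)^2 / 3)) * pd3 1 (fun t' x' y' => divVb Vb t' x' y') t x y) else (-(1/2) * ((1 + z)^2 - (1 + ε * ζ t x y)^2 / 3)) * pd3 0 (fun t' x' y' => divVb Vb t' x' y') t x y)) * Vs i t x y z))
        = ∫ z in (-1:ℝ)..(ε * ζ t x y), (ε * ((((z + 1) * pd3 0 (Vb 0) t x y + Real.sqrt μ * ∫ zp in (-1:ℝ)..z, pd4 0 (Vs 0) t x y zp) + ((z + 1) * pd3 1 (Vb 1) t x y + Real.sqrt μ * ∫ zp in (-1:ℝ)..z, pd4 1 (Vs 1) t x y zp)) * (pz (Vs i) t x y z * Vs j t x y z + Vs i t x y z * pz (Vs j) t x y z)) + ((-(ε * Real.sqrt μ * (pd3 0 (Vb 1) t x y - pd3 1 (Vb 0) t x y) * (if i = 0 then -(pd3 1 (fun t' x' y' => divVb Vb t' x' y') t x y) else pd3 0 (fun t' x' y' => divVb Vb t' x' y') t x y))) * ((-(1/2) * ((1 +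 z)^2 - (1 + ε * ζ t x y)^2 / 3)) * Vs j t x y z) + (-(ε * Real.sqrt μ * (pd3 0 (Vb 1) t x y - pd3 1 (Vb 0) t x y) * (if j = 0 then -(pd3 1 (fun t' x' y' => divVb Vb t' x' y') t x y) else pd3 0 (fun t' x' y' => divVb Vb t' x' y') t x y))) * ((-(1/2) * ((1 + z)^2 - (1 + ε * ζ t x y)^2 / 3)) * Vs i t x y z))) := by
      refine intervalIntegral.integral_congr fun z _ => ?_
      rw [h50 z, h51 z]
      split_ifs <;> ring
    rw [e1]
    simp (disch := fun_prop) only [iadd, intervalIntegral.integral_const_mul]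
    ring
  have h12 : pt3 ζ t x y
      + (ε * pd3 0 ζ t x y * Vb 0 t x y + (1 + ε * ζ t x y) * pd3 0 (Vb 0) t x y)
      + (ε * pd3 1 ζ t x y * Vb 1 t x y + (1 + ε * ζ t x y) * pd3 1 (Vb 1) t x y) = 0 := by
    have hm := hmass t x y
    simp only [Fin.sum_univ_two] at hm
    have e0 : pd3 0 (fun t' x' y' => (1 + ε * ζ t' x' y') * Vb 0 t' x' y') t x y
        = ε * pd3 0 ζ t x y * Vb 0 t x y + (1 + ε * ζ t x y) * pd3 0 (Vb 0) t x y := by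
      have hd1 : DifferentiableAt ℝ (fun u => 1 + ε * ζ t u y) x :=
        ((by fun_prop : ContDiff ℝ (⊤ : ℕ∞) (fun u => 1 + ε * ζ t u y)).differentiable (by simp)).differentiableAt
      have hmul : deriv (fun u => (1 + ε * ζ t u y) * Vb 0 t u y) x
          = deriv (fun u => 1 + ε * ζ t u y) x * Vb 0 t x y
            + (1 + ε * ζ t x y) * deriv (fun u => Vb 0 t u y) x := deriv_fun_mul hd1 (hbX 0)
      have e2 : deriv (fun u => 1 + ε * ζ t u y) x = ε * pd3 0 ζ t x y := by
        rw [deriv_const_add]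
        have hd : DifferentiableAt ℝ (fun u => ζ t u y) x :=
          ((by fun_prop : ContDiff ℝ (⊤ : ℕ∞) (fun u => ζ t u y)).differentiable (by simp)).differentiableAt
        rw [deriv_const_mul ε hd]; rfl
      calc pd3 0 (fun t' x' y' => (1 + ε * ζ t' x' y') * Vb 0 t' x' y') t x y
          = deriv (fun u => (1 + ε * ζ t u y) * Vb 0 t u y) x := by simp [pd3]
        _ = _ := by rw [hmul, e2]; rfl
    have e1 : pd3 1 (fun t' x' y' => (1 + ε * ζ t' x' y') * Vb 1 t' x' y') t x y
        = ε * pd3 1 ζ t x y * Vb 1 t x y + (1 + ε * ζ t x y) * pd3 1 (Vb 1) t x y := by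
      have hd1 : DifferentiableAt ℝ (fun u => 1 + ε * ζ t x u) y :=
        ((by fun_prop : ContDiff ℝ (⊤ : ℕ∞) (fun u => 1 + ε * ζ t x u)).differentiable (by simp)).differentiableAt
      have hmul : deriv (fun u => (1 + ε * ζ t x u) * Vb 1 t x u) y
          = deriv (fun u => 1 + ε * ζ t x u) y * Vb 1 t x y
            + (1 + ε * ζ t x y) * deriv (fun u => Vb 1 t x u) y := deriv_fun_mul hd1 (hbY 1)
      have e2 : deriv (fun u => 1 + ε * ζ t x u) y = ε * pd3 1 ζ t x y := by
        rw [deriv_const_add]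
        have hd : DifferentiableAt ℝ (fun u => ζ t x u) y :=
          ((by fun_prop : ContDiff ℝ (⊤ : ℕ∞) (fun u => ζ t x u)).differentiable (by simp)).differentiableAt
        rw [deriv_const_mul ε hd]; rfl
      calc pd3 1 (fun t' x' y' => (1 + ε * ζ t' x' y') * Vb 1 t' x' y') t x y
          = deriv (fun u => (1 + ε * ζ t x u) * Vb 1 t x u) y := by simp [pd3]
        _ = _ := by rw [hmul, e2]; rfl
    rw [e0, e1] at hm
    linarith
  have hF0 : (∫ z in (-1:ℝ)..(ε * ζ t x y), ((pd4 0 (Vs i) t x y z * Vs j t x y z + Vs i t x y z * pd4 0 (Vs j) t x y z) * Vs 0 t x y z + Vs i t x y z * Vs j t x y z * pd4 0 (Vs 0) t x y z)) = (∫ z in (-1:ℝ)..(ε * ζ t x y), (pd4 0 (Vs i) t x y z * Vs j t x y z + Vs i t x y z * pd4 0 (Vs j) t x y z) * Vs 0 t x y z) + (∫ z in (-1:ℝ)..(ε * ζ t x y), Vs i t x y z * Vs j t x y z * pd4 0 (Vs 0) t x y z) :=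
    iadd (by fun_prop) (by fun_prop)
  have hF1 : (∫ z in (-1:ℝ)..(ε * ζ t x y), ((pd4 1 (Vs i) t x y z * Vs j t x y z + Vs i t x y z * pd4 1 (Vs j) t x y z) * Vs 1 t x y z + Vs i t x y z * Vs j t x y z * pd4 1 (Vs 1) t x y z)) = (∫ z in (-1:ℝ)..(ε * ζ t x y), (pd4 1 (Vs i) t x y z * Vs j t x y z + Vs i t x y z * pd4 1 (Vs j) t x y z) * Vs 1 t x y z) + (∫ z in (-1:ℝ)..(ε * ζ t x y), Vs i t x y z * Vs j t x y z * pd4 1 (Vs 1) t x y z) :=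
    iadd (by fun_prop) (by fun_prop)
  rw [h10, h11] at h9
  simp only [Fin.sum_univ_two, Dtens]
  rw [show divVb Vb t x y = pd3 0 (Vb 0) t x y + pd3 1 (Vb 1) t x y from rfl]
  linear_combination h1 + ε * Vb 0 t x y * h20 + ε * Vb 1 t x y * h21
    + ε * Real.sqrt μ * h30 + ε * Real.sqrt μ * h31
    + ε * Real.sqrt μ * hF0 + ε * Real.sqrt μ * hF1
    + h9 + ε * h6 - ε * h7
    + ε * Real.sqrt μ * (Vs i t x y (ε * ζ t x y) * Vs j t x y (ε * ζ t x y)) * h40 + ε * Real.sqrt μ * (Vs i t x y (ε * ζ t x y) * Vs j t x y (ε * ζ t x y)) * h41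
    - ε * Real.sqrt μ * (pd3 0 (Vb 1) t x y - pd3 1 (Vb 0) t x y) * (if i = 0 then -(pd3 1 (fun t' x' y' => divVb Vb t' x' y') t x y) else pd3 0 (fun t' x' y' => divVb Vb t' x' y') t x y) * (h8 j)
    - ε * Real.sqrt μ * (pd3 0 (Vb 1) t x y - pd3 1 (Vb 0) t x y) * (if j = 0 then -(pd3 1 (fun t' x' y' => divVb Vb t' x' y') t x y) else pd3 0 (fun t' x' y' => divVb Vb t' x' y') t x y) * (h8 i)
    + ε * (Vs i t x y (ε * ζ t x y) * Vs j t x y (ε * ζ t x y)) * h12
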